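/- Let μ be a non-constant dyadic probability distribution on X_n with full support (μ(x) > 0 for every x ∈ X_n), and let D = {A ⊆ X_n : μ(A) = 1/2}. Then D is a maximal antichain in the poset of subsets of X_n ordered by inclusion, and D is closed under complementation (A ∈ D implies X_n \ A ∈ D). -/
import Mathlib


/-- `μ` is a probability distribution. -/
def IsDistribution {α : Type} [Fintype α] (μ : α → ℝ) : Prop :=
  (∀ x, 0 ≤ μ x) ∧ ∑ x, μ x = 1

/-- `μ` is dyadic: every probability is `0` or an integer power of `1/2`. -/
def IsDyadic {α : Type} (μ : α → ℝ) : Prop :=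
  ∀ x, μ x = 0 ∨ ∃ d : ℤ, μ x = (1 / 2 : ℝ) ^ d

/-- `μ` is non-constant: its support has at least two elements. -/
def NonConstant {α : Type} (μ : α → ℝ) : Prop :=
  ∃ x y, x ≠ y ∧ μ x ≠ 0 ∧ μ y ≠ 0

/-- Any family of powers of two, each dividing `T`, whose sum is at least `T`,
has a subfamily summing exactly to `T`. -/
lemma pow2_subset_sum {ι : Type*} [DecidableEq ι] :
    ∀ (s : Finset ι) (f : ι → ℕ) (T : ℕ),
      (∀ i ∈ s, ∃ k, f i = 2 ^ k) → (∀ i ∈ s, f i ∣ T) →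
      T ≤ ∑ i ∈ s, f i → ∃ A ⊆ s, ∑ i ∈ A, f i = T := by
  intro s
  induction s using Finset.strongInduction with
  | _ s ih =>
    intro f T hpow hdvd hle
    rcases Nat.eq_zero_or_pos T with h0 | hT
    · exact ⟨∅, Finset.empty_subset s, by simp [h0]⟩
    · have hsne : s.Nonempty := by
        by_contra h
        rw [Finset.not_nonempty_iff_eq_empty] at h
        simp [h] at hle
        omega
      obtain ⟨i, hi, hmax⟩ := s.exists_max_image f hsne
      obtain ⟨k, hk⟩ := hpow i hi
      have hfiT : f i ≤ T := Nat.le_of_dvd hT (hdvd i hi)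
      have hsub : s.erase i ⊂ s := Finset.erase_ssubset hi
      have hdvd' : ∀ j ∈ s.erase i, f j ∣ T - f i := by
        intro j hj
        have hjs := Finset.mem_of_mem_erase hj
        obtain ⟨m, hm⟩ := hpow j hjs
        have hle' : f j ≤ f i := hmax j hjs
        have hdvdfi : f j ∣ f i := by
          rw [hk, hm] at hle' ⊢
          exact pow_dvd_pow 2 ((Nat.pow_le_pow_iff_right (by norm_num)).mp hle')
        exact Nat.dvd_sub (hdvd j hjs) hdvdfi
      have hle2 : T - f i ≤ ∑ j ∈ s.erase i, f j := by
        have h := Finset.add_sum_erase s f hi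
        omega
      obtain ⟨A, hA, hAs⟩ := ih (s.erase i) hsub f (T - f i)
        (fun j hj => hpow j (Finset.mem_of_mem_erase hj)) hdvd' hle2
      have hiA : i ∉ A := fun h => (Finset.mem_erase.mp (hA h)).1 rfl
      refine ⟨insert i A, Finset.insert_subset hi (hA.trans (Finset.erase_subset i s)), ?_⟩
      rw [Finset.sum_insert hiA, hAs]
      omega

/-- If each value of `μ` is a positive natural power of `1/2` and `μ(C) ≥ 1/2`, then
some subset of `C` has measure exactly `1/2`. -/
lemma half_subset {n : ℕ} (μ : Fin n → ℝ) (g : Fin n → ℕ)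
    (hg1 : ∀ x, 1 ≤ g x) (hg2 : ∀ x, μ x = (1 / 2 : ℝ) ^ g x)
    (C : Finset (Fin n)) (hC : (1 : ℝ) / 2 ≤ ∑ x ∈ C, μ x) :
    ∃ A ⊆ C, ∑ x ∈ A, μ x = 1 / 2 := by
  classical
  set N := C.sup g with hN
  have hCne : C.Nonempty := by
    rcases C.eq_empty_or_nonempty with h | h
    · rw [h] at hC; simp at hC; linarith
    · exact h
  have hN1 : 1 ≤ N := by
    obtain ⟨x, hx⟩ := hCne
    exact le_trans (hg1 x) (Finset.le_sup (f := g) hx)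
  set f : Fin n → ℕ := fun x => 2 ^ (N - g x) with hf
  have hgx_le : ∀ x ∈ C, g x ≤ N := fun x hx => Finset.le_sup (f := g) hx
  have hμf : ∀ x ∈ C, μ x = (f x : ℝ) / 2 ^ N := by
    intro x hx
    rw [hg2 x, hf]
    push_cast
    rw [div_pow, one_pow, div_eq_div_iff (by positivity) (by positivity), one_mul, ← pow_add]
    have hxle := hgx_le x hx
    congr 1
    omega
  have hsum : ∑ x ∈ C, μ x = (∑ x ∈ C, (f x : ℝ)) / 2 ^ N := by
    rw [Finset.sum_div]
    exact Finset.sum_congr rfl hμf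
  have hcast : ((2 : ℝ) ^ (N - 1) : ℝ) ≤ ∑ x ∈ C, (f x : ℝ) := by
    rw [hsum] at hC
    rw [div_le_div_iff₀ (by norm_num) (by positivity)] at hC
    calc (2 : ℝ) ^ (N - 1) = 2 ^ N / 2 := by
          rw [eq_div_iff (by norm_num), ← pow_succ]
          congr 1
          omega
      _ ≤ ∑ x ∈ C, (f x : ℝ) := by linarith
  have hnat : 2 ^ (N - 1) ≤ ∑ x ∈ C, f x := by
    have : ((2 ^ (N - 1) : ℕ) : ℝ) ≤ ((∑ x ∈ C, f x : ℕ) : ℝ) := by push_cast; exact hcast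
    exact_mod_cast this
  obtain ⟨A, hAC, hAsum⟩ := pow2_subset_sum C f (2 ^ (N - 1))
    (fun i _ => ⟨N - g i, rfl⟩)
    (fun i hiC => pow_dvd_pow 2 (by have := hg1 i; have := hgx_le i hiC; omega))
    hnat
  refine ⟨A, hAC, ?_⟩
  have : ∑ x ∈ A, μ x = (∑ x ∈ A, (f x : ℝ)) / 2 ^ N := by
    rw [Finset.sum_div]
    exact Finset.sum_congr rfl fun x hx => hμf x (hAC hx)
  rw [this]
  have : (∑ x ∈ A, (f x : ℝ)) = (2 : ℝ) ^ (N - 1) := by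
    have := congrArg (fun m : ℕ => (m : ℝ)) hAsum
    push_cast at this
    exact this
  rw [this, div_eq_div_iff (by positivity) (by norm_num), one_mul, ← pow_succ]
  congr 1
  omega

/-- For a non-constant dyadic distribution `μ` with full support, the collection
`D = {A : μ(A) = 1/2}` is a maximal antichain under inclusion and is closed under
complementation. -/
theorem splitters_maximal_antichain (n : ℕ) (μ : Fin n → ℝ)
    (hμ : IsDistribution μ) (hd : IsDyadic μ) (hnc : NonConstant μ)
    (hfull : ∀ x, 0 < μ x) :
    IsAntichain (· ⊆ ·) {A : Finset (Fin n) | ∑ x ∈ A, μ x = 1 / 2} ∧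
    (∀ B : Set (Finset (Fin n)),
      {A : Finset (Fin n) | ∑ x ∈ A, μ x = 1 / 2} ⊆ B → IsAntichain (· ⊆ ·) B →
        B = {A : Finset (Fin n) | ∑ x ∈ A, μ x = 1 / 2}) ∧
    (∀ A : Finset (Fin n), A ∈ {A : Finset (Fin n) | ∑ x ∈ A, μ x = 1 / 2} →
      Aᶜ ∈ {A : Finset (Fin n) | ∑ x ∈ A, μ x = 1 / 2}) := by
  classical
  obtain ⟨h0, h1⟩ := hμ
  -- every value is < 1
  have hpair : ∀ x y : Fin n, x ≠ y → μ x + μ y ≤ 1 := by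
    intro x y hxy
    have : ∑ z ∈ ({x, y} : Finset (Fin n)), μ z ≤ ∑ z, μ z :=
      Finset.sum_le_univ_sum_of_nonneg h0
    rwa [Finset.sum_pair hxy, h1] at this
  have hlt1 : ∀ x, μ x < 1 := by
    intro x
    obtain ⟨a, b, hab, _, _⟩ := hnc
    rcases eq_or_ne x a with rfl | h
    · have := hpair x b hab
      have := hfull b
      linarith
    · have := hpair x a h
      have := hfull a
      linarith
  -- dyadic exponents as positive naturals
  have hgx : ∀ x, ∃ k : ℕ, 1 ≤ k ∧ μ x = (1 / 2 : ℝ) ^ k := by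
    intro x
    rcases hd x with h | ⟨d, hdx⟩
    · exact absurd h (ne_of_gt (hfull x))
    · have hd1 : 1 ≤ d := by
        by_contra h
        push_neg at h
        have : (1 : ℝ) ≤ (1 / 2 : ℝ) ^ d :=
          one_le_zpow_of_nonpos₀ (by norm_num) (by norm_num) (by omega)
        rw [← hdx] at this
        exact absurd (hlt1 x) (not_lt.mpr this)
      refine ⟨d.toNat, by omega, ?_⟩
      rw [hdx, ← zpow_natCast]
      congr 1
      omega
  choose g hg1 hg2 using hgx
  -- antichain
  have hanti : IsAntichain (· ⊆ ·) {A : Finset (Fin n) | ∑ x ∈ A, μ x = 1 / 2} := by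
    intro A hA B hB hne hsub
    have hsd : ∑ x ∈ B \ A, μ x + ∑ x ∈ A, μ x = ∑ x ∈ B, μ x := Finset.sum_sdiff hsub
    have hBA : (B \ A).Nonempty := by
      rw [Finset.sdiff_nonempty]
      intro h
      exact hne (Finset.Subset.antisymm hsub h)
    obtain ⟨z, hz⟩ := hBA
    have hpos : 0 < ∑ x ∈ B \ A, μ x :=
      Finset.sum_pos (fun x _ => hfull x) ⟨z, hz⟩
    rw [Set.mem_setOf_eq] at hA hB
    rw [hA, hB] at hsd
    linarith
  -- complement closure
  have hcompl : ∀ A : Finset (Fin n), ∑ x ∈ A, μ x = 1 / 2 →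
      ∑ x ∈ Aᶜ, μ x = 1 / 2 := by
    intro A hA
    have := Finset.sum_add_sum_compl A μ
    rw [hA, h1] at this
    linarith
  refine ⟨hanti, ?_, fun A hA => hcompl A hA⟩
  intro B hDB hB
  refine Set.Subset.antisymm ?_ hDB
  intro C hC
  rw [Set.mem_setOf_eq]
  by_contra hCne
  rcases lt_or_gt_of_ne hCne with hlt | hgt
  · -- μ(C) < 1/2 : extend C to a set of measure 1/2
    have hCc : (1 : ℝ) / 2 ≤ ∑ x ∈ Cᶜ, μ x := by
      have := Finset.sum_add_sum_compl C μ
      rw [h1] at this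
      linarith
    obtain ⟨A, hAC, hAsum⟩ := half_subset μ g hg1 hg2 Cᶜ hCc
    have hCA : C ⊆ Aᶜ := by
      intro x hx
      rw [Finset.mem_compl]
      intro hxA
      have := hAC hxA
      rw [Finset.mem_compl] at this
      exact this hx
    have hAcmem : Aᶜ ∈ B := hDB (hcompl A hAsum)
    have hne : C ≠ Aᶜ := by
      intro h
      apply hCne
      rw [h]
      exact hcompl A hAsum
    exact hB hC hAcmem hne hCA
  · -- μ(C) > 1/2 : shrink C to a set of measure 1/2
    obtain ⟨A, hAC, hAsum⟩ := half_subset μ g hg1 hg2 C (le_of_lt hgt)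
    have hAmem : A ∈ B := hDB hAsum
    have hne : A ≠ C := by
      intro h
      rw [h] at hAsum
      exact hCne hAsum
    exact hB hAmem hC hne hAC
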